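/- For every α ∈ (0,1/2), the set 𝒲₁ is a compact subset of the Banach space of bounded continuous functions on ℝ equipped with the sup-norm; in particular, every sequence in 𝒲₁ admits a subsequence converging uniformly on ℝ to an element of 𝒲₁. -/

import Mathlib

/-!
`𝒲₁` is closed because each defining condition survives pointwise limits. For the condition on
the left derivative at `t₀` this is seen through `g = f ∘ √`: being convex, `g` has a left
derivative at `t₀²` equal to the supremum of its chord slopes ending there, and chord slopes pass
to the limit.

Total boundedness is Arzelà–Ascoli made uniform at infinity. Since `g(0) = 1` and `g ≥ f_l ∘ √`,
whose graph lies above the line of slope `-δ_l / t₀²` through `(0, 1)`, convexity and monotonicity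
make every such `g` Lipschitz with that constant; hence `𝒲₁` is equicontinuous. The upper barrier
`f_u` tends to `0` at infinity, which controls the functions off a compact set.
-/

open Real MeasureTheory Set Filter BoundedContinuousFunction

noncomputable section

namespace GSQGhalfplane

/-- The constant `c_{0,α} = 2^{2α-1} Γ(1+α) / (π Γ(1-α))`. -/
def C0 (α : ℝ) : ℝ := (2:ℝ) ^ (2*α - 1) * Real.Gamma (1 + α) / (π * Real.Gamma (1 - α))

/-- The constant `c'''_{0,α}`. -/
def C3 (α : ℝ) : ℝ :=
  ((4:ℝ) ^ (1 + α) - 4 + α - 4*α^3) * Real.Gamma α /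
    (2*π*α*(5 - 2*α)*(3 - 2*α)*(1 - 2*α)*Real.Gamma (2 - α))

/-- The exponent `δ_u = c'''_{0,α} t₀^{1/2-α} / (1 + c'''_{0,α} t₀^{1/2-α})`. -/
def deltaU (α t0 : ℝ) : ℝ :=
  C3 α * t0 ^ (1/2 - α) / (1 + C3 α * t0 ^ (1/2 - α))

/-- The lower barrier `f_l(x) = (1 + t₀^{-2} x²)^{-δ_l}`. -/
def fl (t0 δl x : ℝ) : ℝ := (1 + x^2 / t0^2) ^ (-δl)

/-- The upper barrier `f_u(x) = min(1, t₀^{δ_u} |x|^{-δ_u})` (with value `1` at `x = 0`). -/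
def fu (α t0 x : ℝ) : ℝ :=
  if x = 0 then 1 else min 1 (t0 ^ deltaU α t0 * |x| ^ (-(deltaU α t0)))

/-- The invariant set `𝒲₁`: even continuous bounded functions with `f(0)=1`,
nonnegative and non-increasing on `[0,∞)`, `x ↦ f(√x)` convex,
`f_l ≤ f ≤ f_u`, and left derivative at `t₀` at most `-t₀^{α-3/2}`. -/
def W1 (α t0 δl : ℝ) (f : ℝ → ℝ) : Prop :=
  Continuous f ∧ (∃ M : ℝ, ∀ x : ℝ, |f x| ≤ M) ∧ (∀ x : ℝ, f (-x) = f x) ∧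
  f 0 = 1 ∧ (∀ x ∈ Ici (0:ℝ), 0 ≤ f x) ∧ AntitoneOn f (Ici (0:ℝ)) ∧
  ConvexOn ℝ (Ici (0:ℝ)) (fun x => f (Real.sqrt x)) ∧
  (∀ x : ℝ, fl t0 δl x ≤ f x) ∧ (∀ x : ℝ, f x ≤ fu α t0 x) ∧
  (∃ d : ℝ, HasDerivWithinAt f d (Iio t0) t0 ∧ d ≤ -(t0 ^ (α - 3/2)))

/-- The linear operator `𝔗_α(f)`, defined for `x > 0`, set to `0` at `x = 0`,
and extended evenly to `ℝ` (via `|x|`). -/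
def Tfr (α : ℝ) (f : ℝ → ℝ) (x : ℝ) : ℝ :=
  if x = 0 then 0
  else (C0 α / α) * ∫ ξ in Ioi (0:ℝ),
    f ξ * (4*α * ξ ^ (-(2*α)) - (ξ / |x|) * (|(|x| - ξ)| ^ (-(2*α)) - (|x| + ξ) ^ (-(2*α))))

/-- The nonlinear map `ℜ_α(f)(x) = exp(-∫₀^{|x|} 𝔗_α(f)(y)/(y(1+𝔗_α(f)(y))) dy)`. -/
def Rfr (α : ℝ) (f : ℝ → ℝ) (x : ℝ) : ℝ :=
  Real.exp (-(∫ y in (0:ℝ)..|x|, Tfr α f y / (y * (1 + Tfr α f y))))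

/-- The functional `𝔟(f) = 4 c_{0,α} ∫₀^∞ f(ξ) ξ^{-2α} dξ`. -/
def bfr (α : ℝ) (f : ℝ → ℝ) : ℝ := 4 * C0 α * ∫ ξ in Ioi (0:ℝ), f ξ * ξ ^ (-(2*α))

/-- The functional `𝔠(f) = (8(1+2α)(1+α)/3) c_{0,α} ∫₀^∞ (1-f(ξ)) ξ^{-2-2α} dξ`. -/
def cfr (α : ℝ) (f : ℝ → ℝ) : ℝ :=
  (8*(1+2*α)*(1+α)/3) * C0 α * ∫ ξ in Ioi (0:ℝ), (1 - f ξ) * ξ ^ (-2 - 2*α)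

/-- The lower bound `b'_α`. -/
def bLow (α t0 δl : ℝ) : ℝ :=
  2 * C0 α * t0 ^ (1 - 2*α) * Real.Gamma (1/2 - α) * Real.Gamma (α + δl - 1/2) /
    Real.Gamma δl

/-- The upper bound `b''_α`. -/
def bHigh (α t0 : ℝ) : ℝ :=
  4 * C0 α * t0 ^ (1 - 2*α) * (1/(1 - 2*α) + 1/(deltaU α t0 + 2*α - 1))

/-- The upper bound `c''_{0,α}`. -/
def cHigh (α t0 δl : ℝ) : ℝ :=
  C0 α * t0 ^ (-1 - 2*α) * 8 * (1 + α) * Real.Gamma (1/2 - α) *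
    Real.Gamma (δl + α + 1/2) / (3 * Real.Gamma δl)

end GSQGhalfplane

open Topology

theorem Equicontinuous.comp_continuous {ι X Y α : Type*} [TopologicalSpace X]
    [TopologicalSpace Y] [UniformSpace α] {F : ι → Y → α} (hF : Equicontinuous F) {φ : X → Y}
    (hφ : Continuous φ) : Equicontinuous fun i => F i ∘ φ :=
  fun x₀ U hU => (hφ.tendsto x₀).eventually (hF (φ x₀) U hU)

theorem BoundedContinuousFunction.totallyBounded_of_equicontinuous_of_dominated
    {α E : Type*} [TopologicalSpace α] [NormedAddCommGroup E] [ProperSpace E]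
    {S : Set (α →ᵇ E)} (hS : Equicontinuous ((↑) : S → α → E)) {C : ℝ}
    (hC : ∀ F ∈ S, ∀ x, ‖F x‖ ≤ C) {u : α → ℝ} (hu : Tendsto u (cocompact α) (𝓝 0))
    (hdom : ∀ F ∈ S, ∀ x, ‖F x‖ ≤ u x) : TotallyBounded S := by
  refine Metric.totallyBounded_of_finite_discretization fun ε hε => ?_
  obtain ⟨K, hK, hKu⟩ :=
    mem_cocompact.1 (hu.eventually (gt_mem_nhds (by positivity : 0 < ε / 4)))
  have : CompactSpace K := isCompact_iff_compactSpace.1 hK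
  let R : (α →ᵇ E) → (K →ᵇ E) := fun F => F.compContinuous ⟨Subtype.val, continuous_subtype_val⟩
  have hRS : Equicontinuous ((↑) : R '' S → K → E) := by
    intro x₀ U hU
    filter_upwards [(continuous_subtype_val.tendsto x₀).eventually (hS x₀ U hU)] with x hx
    rintro ⟨_, F, hF, rfl⟩
    exact hx ⟨F, hF⟩
  have hbdd : ∀ G ∈ R '' S, ∀ x, G x ∈ Metric.closedBall (0 : E) C := by
    rintro _ ⟨F, hF, rfl⟩ x
    exact mem_closedBall_zero_iff.2 (hC F hF x)
  obtain ⟨t, ht, hSt⟩ := Metric.totallyBounded_iff.1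
    ((arzela_ascoli _ (isCompact_closedBall 0 C) _ (fun G x hG => hbdd G hG x)
      hRS).totallyBounded.subset subset_closure) (ε / 4) (by positivity)
  have hnet : ∀ F : S, ∃ y : t, dist (R F) y < ε / 4 := fun F => by
    simpa using hSt (mem_image_of_mem R F.2)
  choose code hcode using hnet
  refine ⟨t, ht.fintype, code, fun ⟨F, hF⟩ ⟨G, hG⟩ hFG => ?_⟩
  have hRFG : dist (R F) (R G) < ε / 2 := by
    have hGnet := hFG ▸ hcode ⟨G, hG⟩
    linarith [dist_triangle_right (R F) (R G) (code ⟨F, hF⟩), hcode ⟨F, hF⟩]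
  refine lt_of_le_of_lt ((dist_le (by positivity)).2 fun x => ?_) (by linarith : ε / 2 < ε)
  by_cases hx : x ∈ K
  · exact (dist_coe_le_dist (f := R F) (g := R G) ⟨x, hx⟩).trans hRFG.le
  · calc dist (F x) (G x) ≤ ‖F x‖ + ‖G x‖ := dist_le_norm_add_norm _ _
      _ ≤ ε / 2 := by linarith [hdom F hF x, hdom G hG x, show u x < ε / 4 from hKu hx]

theorem one_sub_mul_le_one_add_rpow_neg {u δ : ℝ} (hu : 0 ≤ u) (hδ : 0 ≤ δ) :
    1 - δ * u ≤ (1 + u) ^ (-δ) := by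
  have hlog : Real.log (1 + u) ≤ u := by
    linarith [Real.log_le_sub_one_of_pos (by linarith : 0 < 1 + u)]
  rw [Real.rpow_def_of_pos (by linarith)]
  nlinarith [Real.add_one_le_exp (Real.log (1 + u) * -δ)]

theorem convexOn_of_tendsto {ι : Type*} {l : Filter ι} [l.NeBot] {s : Set ℝ} {F : ι → ℝ → ℝ}
    {f : ℝ → ℝ} (hs : Convex ℝ s) (hF : ∀ i, ConvexOn ℝ s (F i))
    (hlim : ∀ x ∈ s, Tendsto (fun i => F i x) l (𝓝 (f x))) : ConvexOn ℝ s f := by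
  refine ⟨hs, fun x hx y hy a b ha hb hab => ?_⟩
  exact le_of_tendsto_of_tendsto' (hlim _ (hs hx hy ha hb hab))
    (((hlim x hx).const_smul a).add ((hlim y hy).const_smul b)) fun i => (hF i).2 hx hy ha hb hab

theorem ConvexOn.lipschitzOnWith_Ici {g : ℝ → ℝ} {a : ℝ} {c : NNReal}
    (hconv : ConvexOn ℝ (Ici a) g) (hanti : AntitoneOn g (Ici a))
    (hlow : ∀ s ∈ Ici a, g a - c * (s - a) ≤ g s) : LipschitzOnWith c g (Ici a) := by
  have key : ∀ x ∈ Ici a, ∀ y ∈ Ici a, x < y → g x - g y ≤ c * (y - x) := by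
    intro x hx y hy hxy
    rcases eq_or_lt_of_le (mem_Ici.1 hx) with rfl | hax
    · linarith [hlow y hy]
    have hslope := hconv.slope_mono_adjacent (mem_Ici.2 le_rfl) hy hax hxy
    have h1 : -c ≤ (g x - g a) / (x - a) := by
      rw [le_div_iff₀ (by linarith)]; linarith [hlow x hx]
    have h2 := h1.trans hslope
    rw [le_div_iff₀ (by linarith)] at h2
    linarith
  refine LipschitzOnWith.of_dist_le_mul fun x hx y hy => ?_
  rw [Real.dist_eq, Real.dist_eq]
  rcases lt_trichotomy x y with hxy | rfl | hxy
  · rw [abs_of_nonneg (sub_nonneg.2 (hanti hx hy hxy.le)), abs_sub_comm, abs_of_pos (by linarith)]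
    exact key x hx y hy hxy
  · simp
  · rw [abs_sub_comm, abs_of_nonneg (sub_nonneg.2 (hanti hy hx hxy.le)), abs_of_pos (by linarith)]
    exact key y hy x hx hxy

/-- Near `b > 0`, `f = (f ∘ √) ∘ (·²)`, so the left derivative of `f` at `b` is `2b` times that
of `f ∘ √` at `b²`. -/
theorem exists_hasDerivWithinAt_Iio_le_iff_slope_le {f : ℝ → ℝ} {b m : ℝ}
    (hconv : ConvexOn ℝ (Ici 0) (fun x => f √x)) (hb : 0 < b) :
    (∃ d, HasDerivWithinAt f d (Iio b) b ∧ d ≤ 2 * b * m) ↔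
      ∀ y ∈ Ico 0 (b ^ 2), slope (fun x => f √x) y (b ^ 2) ≤ m := by
  have hsqrt : √(b ^ 2) = b := Real.sqrt_sq hb.le
  constructor
  · rintro ⟨d, hd, hdm⟩ y ⟨hy0, hyb⟩
    have hsqrtd : HasDerivWithinAt (fun x => √x) (1 / (2 * b)) (Iio (b ^ 2)) (b ^ 2) := by
      simpa [hsqrt] using (Real.hasDerivAt_sqrt (by positivity : b ^ 2 ≠ 0)).hasDerivWithinAt
    have hcomp := hd.comp_of_eq (b ^ 2) hsqrtd
      (fun x hx => (Real.sqrt_lt' hb).2 hx) hsqrt.symm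
    calc slope (fun x => f √x) y (b ^ 2) ≤ d * (1 / (2 * b)) :=
          hconv.slope_le_of_hasDerivWithinAt_Iio hy0 (mem_Ici.2 (by positivity)) hyb hcomp
      _ ≤ m := by rw [mul_one_div, div_le_iff₀ (by positivity)]; linarith
  · intro hslope
    set g : ℝ → ℝ := fun x => f √x
    set L := sSup (slope g (b ^ 2) '' {y ∈ Ici 0 | y < b ^ 2})
    have hL : HasDerivWithinAt g L (Iio (b ^ 2)) (b ^ 2) :=
      hconv.hasDerivWithinAt_sSup_slope_of_mem_interior (by simp; positivity)
    have hLm : L ≤ m := by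
      refine csSup_le ⟨_, mem_image_of_mem _ ⟨mem_Ici.2 le_rfl, by positivity⟩⟩ ?_
      rintro _ ⟨y, ⟨hy0, hyb⟩, rfl⟩
      rw [slope_comm]
      exact hslope y ⟨hy0, hyb⟩
    have hgsq : HasDerivWithinAt (g ∘ fun x => x ^ 2) (L * (2 * b)) (Iio b ∩ Ioi 0) b := by
      refine hL.comp_of_eq b ?_ (fun x hx => ?_) rfl
      · simpa using (hasDerivAt_pow 2 b).hasDerivWithinAt
      · exact pow_lt_pow_left₀ (mem_Iio.1 hx.1) (mem_Ioi.1 hx.2).le two_ne_zero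
    refine ⟨L * (2 * b), ?_, by nlinarith⟩
    refine (hasDerivWithinAt_inter (Ioi_mem_nhds hb)).1 (hgsq.congr (fun x hx => ?_) ?_)
    · simp [g, Real.sqrt_sq hx.2.le]
    · simp [g, hsqrt]

namespace GSQGhalfplane

theorem C3_pos {α : ℝ} (hα : α ∈ Ioo (0:ℝ) (1/2)) : 0 < C3 α := by
  obtain ⟨h0, h1⟩ := hα
  have h4 : (4:ℝ) ≤ 4 ^ (1 + α) := by
    simpa using Real.rpow_le_rpow_of_exponent_le (by norm_num : (1:ℝ) ≤ 4) (by linarith : 1 ≤ 1 + α)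
  have hnum : 0 < (4:ℝ) ^ (1 + α) - 4 + α - 4 * α ^ 3 := by
    nlinarith [mul_pos h0 (show (0:ℝ) < 1 - 4 * α ^ 2 by nlinarith)]
  have := Real.Gamma_pos_of_pos h0
  have := Real.Gamma_pos_of_pos (by linarith : 0 < 2 - α)
  have := Real.pi_pos
  unfold C3
  apply div_pos <;> apply_rules [mul_pos] <;> linarith

theorem deltaU_pos {α t0 : ℝ} (hα : α ∈ Ioo (0:ℝ) (1/2)) (ht0 : 0 < t0) : 0 < deltaU α t0 := by
  have : 0 < C3 α * t0 ^ (1/2 - α) := mul_pos (C3_pos hα) (Real.rpow_pos_of_pos ht0 _)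
  exact div_pos this (by linarith)

theorem fl_pos (t0 δl x : ℝ) : 0 < fl t0 δl x :=
  Real.rpow_pos_of_pos (by positivity) _

theorem fu_le_one (α t0 x : ℝ) : fu α t0 x ≤ 1 := by
  unfold fu; split_ifs
  exacts [le_rfl, min_le_left _ _]

theorem tendsto_fu_cocompact {α t0 : ℝ} (ht0 : 0 ≤ t0) (hδ : 0 < deltaU α t0) :
    Tendsto (fu α t0) (cocompact ℝ) (𝓝 0) := by
  have hdecay : Tendsto (fun x : ℝ => t0 ^ deltaU α t0 * |x| ^ (-deltaU α t0))
      (cocompact ℝ) (𝓝 0) := by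
    simpa using ((tendsto_rpow_neg_atTop hδ).comp
      (tendsto_norm_cocompact_atTop (E := ℝ))).const_mul (t0 ^ deltaU α t0)
  refine tendsto_of_tendsto_of_tendsto_of_le_of_le' tendsto_const_nhds hdecay ?_ ?_
  · refine Eventually.of_forall fun x => ?_
    unfold fu; split_ifs
    exacts [zero_le_one, le_min zero_le_one (by positivity)]
  · filter_upwards [(isCompact_singleton : IsCompact {(0:ℝ)}).compl_mem_cocompact] with x hx
    rw [fu, if_neg (mem_compl_singleton_iff.1 hx)]
    exact min_le_right _ _

section W1

variable {α t0 δl : ℝ} {f : ℝ → ℝ}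

theorem W1.abs_le_fu (hf : W1 α t0 δl f) (x : ℝ) : |f x| ≤ fu α t0 x := by
  obtain ⟨-, -, -, -, -, -, -, hfl, hfu, -⟩ := hf
  rw [abs_of_pos ((fl_pos t0 δl x).trans_le (hfl x))]
  exact hfu x

theorem W1.apply_abs (hf : W1 α t0 δl f) (x : ℝ) : f |x| = f x := by
  obtain ⟨-, -, heven, -⟩ := hf
  rcases abs_choice x with h | h <;> rw [h]
  exact heven x

theorem W1.lipschitzWith_comp_sqrt (hδl : 0 ≤ δl) (hf : W1 α t0 δl f) :
    LipschitzWith (δl / t0 ^ 2).toNNReal (fun s => f √s) := by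
  obtain ⟨-, -, -, h0, -, hanti, hconv, hfl, -, -⟩ := hf
  have hc : ((δl / t0 ^ 2).toNNReal : ℝ) = δl / t0 ^ 2 := Real.coe_toNNReal _ (by positivity)
  have hon : LipschitzOnWith (δl / t0 ^ 2).toNNReal (fun s => f √s) (Ici 0) := by
    refine hconv.lipschitzOnWith_Ici (fun x hx y hy hxy => hanti (Real.sqrt_nonneg x)
      (Real.sqrt_nonneg y) (Real.sqrt_le_sqrt hxy)) fun s hs => ?_
    have hfls : fl t0 δl √s = (1 + s / t0 ^ 2) ^ (-δl) := by
      rw [fl, Real.sq_sqrt (mem_Ici.1 hs)]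
    simp only [Real.sqrt_zero, h0, hc, sub_zero]
    calc 1 - δl / t0 ^ 2 * s = 1 - δl * (s / t0 ^ 2) := by ring
      _ ≤ (1 + s / t0 ^ 2) ^ (-δl) :=
        one_sub_mul_le_one_add_rpow_neg (div_nonneg (mem_Ici.1 hs) (sq_nonneg t0)) hδl
      _ = fl t0 δl √s := hfls.symm
      _ ≤ f √s := hfl √s
  have hmax : (fun s => f √s) = (fun s => f √s) ∘ fun s => max s 0 := by
    funext s
    rcases le_total s 0 with h | h
    · simp [max_eq_right h, Real.sqrt_eq_zero'.2 h]
    · simp [max_eq_left h]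
  rw [hmax]
  simpa [lipschitzOnWith_univ] using
    hon.comp (s := univ) (LipschitzWith.id.max_const 0).lipschitzOnWith fun s _ => le_max_right s 0

theorem equicontinuous_of_forall_W1 {ι : Type*} {F : ι → ℝ → ℝ} (hδl : 0 ≤ δl)
    (hF : ∀ i, W1 α t0 δl (F i)) : Equicontinuous F := by
  have hsq : F = fun i => (fun s => F i √s) ∘ fun x => x ^ 2 := by
    funext i x
    simp [Real.sqrt_sq_eq_abs, (hF i).apply_abs]
  rw [hsq]
  exact (LipschitzWith.uniformEquicontinuous _ _ fun i =>
    (hF i).lipschitzWith_comp_sqrt hδl).equicontinuous.comp_continuous (continuous_pow 2)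

theorem W1_of_tendsto {ι : Type*} {l : Filter ι} [l.NeBot] {F : ι → ℝ → ℝ} (ht0 : 0 < t0)
    (hF : ∀ i, W1 α t0 δl (F i)) (hlim : ∀ x, Tendsto (fun i => F i x) l (𝓝 (f x)))
    (hcont : Continuous f) (hbdd : ∃ M, ∀ x, |f x| ≤ M) : W1 α t0 δl f := by
  unfold W1 at hF
  choose _ _ heven h0 hnonneg hanti hconv hfl hfu hderiv using hF
  have hconvf : ConvexOn ℝ (Ici 0) (fun x => f √x) :=
    convexOn_of_tendsto (convex_Ici 0) hconv fun x _ => hlim √x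
  have hm : -(t0 ^ (α - 3/2)) = 2 * t0 * (-(t0 ^ (α - 3/2)) / (2 * t0)) := by
    field_simp
  refine ⟨hcont, hbdd,
    fun x => tendsto_nhds_unique ((hlim (-x)).congr fun i => heven i x) (hlim x),
    tendsto_nhds_unique (hlim 0) ((tendsto_congr h0).2 tendsto_const_nhds),
    fun x hx => ge_of_tendsto' (hlim x) fun i => hnonneg i x hx,
    fun x hx y hy hxy => le_of_tendsto_of_tendsto' (hlim y) (hlim x) fun i => hanti i hx hy hxy,
    hconvf, fun x => ge_of_tendsto' (hlim x) fun i => hfl i x,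
    fun x => le_of_tendsto' (hlim x) fun i => hfu i x, ?_⟩
  rw [hm, exists_hasDerivWithinAt_Iio_le_iff_slope_le hconvf ht0]
  intro y hy
  have hslope i := (exists_hasDerivWithinAt_Iio_le_iff_slope_le (hconv i) ht0).1
    ((hderiv i).imp fun _ hd => ⟨hd.1, hd.2.trans_eq hm⟩) y hy
  refine le_of_tendsto' (x := l) ?_ hslope
  simp only [slope_def_field]
  exact ((hlim _).sub (hlim _)).div_const _

theorem isClosed_setOf_W1 (ht0 : 0 < t0) : IsClosed {F : ℝ →ᵇ ℝ | W1 α t0 δl F} :=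
  IsSeqClosed.isClosed fun _ G hF hFG =>
    W1_of_tendsto ht0 hF (fun x => (tendsto_iff_tendstoUniformly.1 hFG).tendsto_at x)
      G.continuous ⟨‖G‖, fun x => by simpa using G.norm_coe_le_norm x⟩

theorem totallyBounded_setOf_W1 (ht0 : 0 < t0) (hδl : 0 ≤ δl) (hδu : 0 < deltaU α t0) :
    TotallyBounded {F : ℝ →ᵇ ℝ | W1 α t0 δl F} :=
  totallyBounded_of_equicontinuous_of_dominated (equicontinuous_of_forall_W1 hδl fun F => F.2)
    (fun _ hF x => (hF.abs_le_fu x).trans (fu_le_one α t0 x)) (tendsto_fu_cocompact ht0.le hδu)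
    fun _ hF x => hF.abs_le_fu x

end W1

theorem W1_compact_general (α t0 δl : ℝ) (hα : α ∈ Ioo (0:ℝ) (1/2)) (ht0 : 1 < t0)
    (hδl : 1/2 ≤ δl) :
    IsCompact {F : ℝ →ᵇ ℝ | W1 α t0 δl ⇑F} ∧
    ∀ u : ℕ → ℝ → ℝ, (∀ n, W1 α t0 δl (u n)) →
      ∃ g : ℝ → ℝ, W1 α t0 δl g ∧ ∃ φ : ℕ → ℕ, StrictMono φ ∧
        TendstoUniformly (fun n => u (φ n)) g atTop := by
  have ht0' : 0 < t0 := by linarith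
  have hcompact : IsCompact {F : ℝ →ᵇ ℝ | W1 α t0 δl ⇑F} :=
    (totallyBounded_setOf_W1 ht0' (by linarith) (deltaU_pos hα ht0')).isCompact_of_isClosed
      (isClosed_setOf_W1 ht0')
  refine ⟨hcompact, fun u hu => ?_⟩
  let F n : ℝ →ᵇ ℝ := .ofNormedAddCommGroup (u n) (hu n).1 1 fun x =>
    ((hu n).abs_le_fu x).trans (fu_le_one α t0 x)
  obtain ⟨G, hG, φ, hφ, hlim⟩ := hcompact.tendsto_subseq (x := F) hu
  exact ⟨G, hG, φ, hφ, tendsto_iff_tendstoUniformly.1 hlim⟩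

/-- `𝒲₁` is a compact subset of the Banach space of bounded continuous functions
on `ℝ` with the sup-norm; in particular every sequence in `𝒲₁` admits a
subsequence converging uniformly on `ℝ` to an element of `𝒲₁`. -/
theorem W1_compact (α t0 δl : ℝ) (hα : α ∈ Ioo (0:ℝ) (1/2)) (ht0 : 1 < t0)
    (ht1 : max (1 / C3 α) ((1 - 2*α) / (2*α * C3 α)) < t0 ^ (1/2 - α))
    (ht2 : (2:ℝ) ^ ((2:ℝ) ^ α + 2) * Real.Gamma (2 + α) * Real.Gamma (1/2 - α) /
        (3*π*α*Real.Gamma (1 - α)) < t0 ^ (1/2 + α))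
    (hδl : 1/2 ≤ δl)
    (hδ1 : (2:ℝ) ^ (2*α) * Real.Gamma (2 + α) * Real.Gamma (1/2 - α) /
        (3*π*Real.Gamma (1 - α)) ≤
        Real.Gamma (δl + 1) * t0 ^ (2*α - 1) / Real.Gamma (δl + α + 1/2))
    (hδ2 : Real.Gamma (δl + 1) * t0 ^ (2*α - 1) / Real.Gamma (δl + α + 1/2) ≤
        (2:ℝ) ^ (2*α + 1) * Real.Gamma (2 + α) * Real.Gamma (1/2 - α) /
        (3*π*Real.Gamma (1 - α))) :
    IsCompact {F : ℝ →ᵇ ℝ | W1 α t0 δl ⇑F} ∧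
    ∀ u : ℕ → ℝ → ℝ, (∀ n, W1 α t0 δl (u n)) →
      ∃ g : ℝ → ℝ, W1 α t0 δl g ∧ ∃ φ : ℕ → ℕ, StrictMono φ ∧
        TendstoUniformly (fun n => u (φ n)) g atTop :=
  W1_compact_general α t0 δl hα ht0 hδl

end GSQGhalfplane
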